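/- arXiv:1710.00458 — 2 statements merged into one kernel-verified Lean document; each statement's English description precedes it below -/
import Mathlib

section
/- Let n, a, r be natural numbers with r > 0 and a + r ≤ n, let T : Fin n → α be a table, and let the selected rows be those with indices in the segment {a, a+1, …, a+r−1}. Define the output table R : Fin r → α by setting R(j) = T(i) for the unique index i in the segment with i mod r = j. Then the multiset of values of R equals the multiset of selected rows {T(a), T(a+1), …, T(a+r−1)}; equivalently, there is a permutation σ of Fin r such that R(j) = T(a + σ(j)) for every j. -/
/-! Reduction mod `r` is a bijection from any window `{a, …, a + r - 1}` of `r` consecutive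
naturals onto `Fin r`, with inverse `j ↦ a + (j - a mod r)`; so the row written to position `j`
is `T (a + (j - a))`, and `σ = (· - a)` is the required permutation. -/

theorem Fin.add_val_sub_ofNat_mod {r : ℕ} [NeZero r] (a : ℕ) (j : Fin r) :
    (a + (j - Fin.ofNat r a : Fin r)) % r = j := by
  have hsum : Fin.ofNat r a + (j - Fin.ofNat r a) = j := add_sub_cancel _ _
  rw [Fin.ext_iff, Fin.val_add, Fin.val_ofNat] at hsum
  rwa [← Nat.mod_add_mod]

/-- Continuous SELECT correctness: if `R : Fin r → α` is defined by writing the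
row `T i` (for `i` in the segment `{a, …, a+r−1}`) to output position `i % r`,
then `R` is a permutation of the selected rows: there is a permutation `σ` of
`Fin r` with `R j = T (a + σ j)` for every `j`. -/
theorem continuous_select_correct {α : Type*} (n a r : ℕ) (hr : 0 < r)
    (hn : a + r ≤ n) (T : Fin n → α) (R : Fin r → α)
    (hR : ∀ (i : ℕ) (_hi₁ : a ≤ i) (_hi₂ : i < a + r),
      R ⟨i % r, Nat.mod_lt i hr⟩ = T ⟨i, by omega⟩) :
    ∃ σ : Equiv.Perm (Fin r), ∀ j : Fin r,
      R j = T ⟨a + σ j, by have := (σ j).isLt; omega⟩ := by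
  have : NeZero r := .of_pos hr
  refine ⟨Equiv.subRight (Fin.ofNat r a), fun j => ?_⟩
  have hj : (⟨(a + (Equiv.subRight (Fin.ofNat r a) j : ℕ)) % r, Nat.mod_lt _ hr⟩ : Fin r) = j :=
    Fin.ext (Fin.add_val_sub_ofNat_mod a j)
  rw [← hR _ (Nat.le_add_right _ _) (by omega), hj]
end

section
/- Let T₁ : Fin n → α and T₂ : Fin m → β be tables with join-key functions k₁ : α → K and k₂ : β → K, and suppose the composite k₂ ∘ T₂ is injective (i.e., the join column of T₂ is a primary key, so the join is a foreign-key join). Then the cardinality of the set of matching index pairs {(i, j) : k₁(T₁ i) = k₂(T₂ j)} is at most n; in particular it is at most max(n, m). -/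
open Finset Function

def equiJoin {ι κ K : Type*} [DecidableEq K] (s : Finset ι) (t : Finset κ) (f : ι → K)
    (g : κ → K) : Finset (ι × κ) :=
  (s ×ˢ t).filter fun p => f p.1 = g p.2

/-- Each row of `s` has at most one partner in `t`, so `Prod.fst` is injective on the join. -/
theorem card_equiJoin_le_card_left {ι κ K : Type*} [DecidableEq K] (s : Finset ι)
    {t : Finset κ} (f : ι → K) {g : κ → K} (hg : Set.InjOn g t) :
    (equiJoin s t f g).card ≤ s.card := by
  refine card_le_card_of_injOn Prod.fst (fun p hp => ?_) fun p hp q hq hfst => ?_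
  · exact (mem_product.1 (mem_filter.1 hp).1).1
  · obtain ⟨hpst, hpkey⟩ := mem_filter.1 hp
    obtain ⟨hqst, hqkey⟩ := mem_filter.1 hq
    have hkey : g p.2 = g q.2 := by rw [← hpkey, ← hqkey, hfst]
    exact Prod.ext hfst (hg (mem_product.1 hpst).2 (mem_product.1 hqst).2 hkey)

/-- Foreign-key join output bound: if the join column of `T₂` is a key
(`k₂ ∘ T₂` injective), then the number of matching index pairs is at most `n`;
in particular it is at most `max n m`. -/
theorem foreign_key_join_bound {α β K : Type*} [DecidableEq K] (n m : ℕ)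
    (T₁ : Fin n → α) (T₂ : Fin m → β) (k₁ : α → K) (k₂ : β → K)
    (hinj : Function.Injective (k₂ ∘ T₂)) :
    (Finset.univ.filter
        (fun p : Fin n × Fin m => k₁ (T₁ p.1) = k₂ (T₂ p.2))).card ≤ n ∧
    (Finset.univ.filter
        (fun p : Fin n × Fin m => k₁ (T₁ p.1) = k₂ (T₂ p.2))).card ≤ max n m := by
  have hle : (univ.filter fun p : Fin n × Fin m => k₁ (T₁ p.1) = k₂ (T₂ p.2)).card ≤ n := by
    have hjoin := card_equiJoin_le_card_left univ (k₁ ∘ T₁) (t := univ)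
      (by simpa only [coe_univ] using hinj.injOn)
    rwa [equiJoin, univ_product_univ, card_univ, Fintype.card_fin] at hjoin
  exact ⟨hle, hle.trans (le_max_left n m)⟩
end
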